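/- Let S, A be nonempty finite types, let ρ be a density matrix indexed by (S×A)×(S×A), and let 1 ≤ d ≤ |S|. Then 0 ≤ C^(d)_{S|A}(ρ) ≤ ε^(d)(tr_A ρ). -/

import Mathlib

/-!
Each outcome of a POVM `{M_x}` leaves `S` in the state `tr_A((1 ⊗ M_x) ρ)`, which is positive
semidefinite (write `M_x = B*B` and move `1 ⊗ B` around the partial trace), so after
normalisation it is a density matrix and its `ε^(d)` is nonnegative: the `d` largest eigenvalues
of a density matrix sum to at most its trace `1`. Hence every POVM average is nonnegative, and so
is their infimum, which gives the upper bound. The trivial POVM `{1}` achieves `ε^(d)(tr_A ρ)`, so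
the infimum is at most that value, which gives `C^(d) ≥ 0`.
-/

open Matrix
open scoped ComplexOrder Kronecker Classical

/-- Sum of the `d` largest eigenvalues (with multiplicity, decreasing order)
of a Hermitian matrix. -/
noncomputable def sumTopEigs {n : Type*} [Fintype n] [DecidableEq n]
    {A : Matrix n n ℂ} (hA : A.IsHermitian) (d : ℕ) : ℝ :=
  ((((Finset.univ.val.map hA.eigenvalues).sort (· ≤ ·)).reverse.take d)).sum

/-- `ε^(d)(A) = 1 - Σ_{i=1}^d λ_i^↓(A)` for Hermitian `A` (junk value `0` otherwise). -/
noncomputable def epsD {n : Type*} [Fintype n] [DecidableEq n]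
    (A : Matrix n n ℂ) (d : ℕ) : ℝ :=
  if h : A.IsHermitian then 1 - sumTopEigs h d else 0

/-- `|ψ⟩⟨ψ|`. -/
noncomputable def outer {n : Type*} (ψ : n → ℂ) : Matrix n n ℂ :=
  fun i j => ψ i * star (ψ j)

/-- Partial trace over the second tensor factor. -/
noncomputable def ptraceR {S R : Type*} [Fintype R] (M : Matrix (S × R) (S × R) ℂ) :
    Matrix S S ℂ :=
  fun s s' => ∑ r, M (s, r) (s', r)

/-- Partial trace over the third tensor factor. -/
noncomputable def ptrace3 {S R A : Type*} [Fintype A] (M : Matrix (S × R × A) (S × R × A) ℂ) :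
    Matrix (S × R) (S × R) ℂ :=
  fun p q => ∑ a, M (p.1, p.2, a) (q.1, q.2, a)

/-- Partial trace over the second (middle) tensor factor. -/
noncomputable def ptrace2 {S R A : Type*} [Fintype R] (M : Matrix (S × R × A) (S × R × A) ℂ) :
    Matrix (S × A) (S × A) ℂ :=
  fun p q => ∑ r, M (p.1, r, p.2) (q.1, r, q.2)

/-- Partial trace over the second and third tensor factors. -/
noncomputable def ptrace23 {S R A : Type*} [Fintype R] [Fintype A]
    (M : Matrix (S × R × A) (S × R × A) ℂ) : Matrix S S ℂ :=
  fun s s' => ∑ r, ∑ a, M (s, r, a) (s', r, a)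

/-- Convex-roof extension `E^(d)_{S|R}`: the infimum over all finite pure-state
convex decompositions `ρ = Σ_k p_k |ψ_k⟩⟨ψ_k|` of `Σ_k p_k ε^(d)(tr_R |ψ_k⟩⟨ψ_k|)`. -/
noncomputable def convRoofE {S R : Type*} [Fintype S] [Fintype R] [DecidableEq S]
    (d : ℕ) (ρ : Matrix (S × R) (S × R) ℂ) : ℝ :=
  sInf { e : ℝ | ∃ (m : ℕ) (p : Fin m → ℝ) (ψ : Fin m → (S × R → ℂ)),
    (∀ k, 0 ≤ p k) ∧ (∑ k, p k = 1) ∧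
    (∀ k, star (ψ k) ⬝ᵥ ψ k = 1) ∧
    (ρ = ∑ k, (p k : ℂ) • outer (ψ k)) ∧
    e = ∑ k, p k * epsD (ptraceR (outer (ψ k))) d }

/-- Classical correlations `C^(d)_{S|A}`:
`ε^(d)(tr_A ρ)` minus the infimum over all POVMs `{M_x}` on `A` of
`Σ_x p_x ε^(d)(p_x⁻¹ tr_A((1_S ⊗ M_x) ρ))`, where `p_x = tr((1_S ⊗ M_x) ρ)`
and terms with `p_x = 0` are omitted. -/
noncomputable def classC {S A : Type*} [Fintype S] [Fintype A] [DecidableEq S] [DecidableEq A]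
    (d : ℕ) (ρ : Matrix (S × A) (S × A) ℂ) : ℝ :=
  epsD (ptraceR ρ) d -
  sInf { e : ℝ | ∃ (m : ℕ) (M : Fin m → Matrix A A ℂ),
    (∀ x, (M x).PosSemidef) ∧ (∑ x, M x = 1) ∧
    e = ∑ x,
      (if (((1 : Matrix S S ℂ) ⊗ₖ M x) * ρ).trace = 0 then 0
       else ((((1 : Matrix S S ℂ) ⊗ₖ M x) * ρ).trace).re *
         epsD (((((1 : Matrix S S ℂ) ⊗ₖ M x) * ρ).trace)⁻¹ •
           ptraceR (((1 : Matrix S S ℂ) ⊗ₖ M x) * ρ)) d) }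

section PartialTrace

variable {S A : Type*} [Fintype A]

lemma ptraceR_eq_sum_submatrix (M : Matrix (S × A) (S × A) ℂ) :
    ptraceR M = ∑ a, M.submatrix (·, a) (·, a) := by
  ext s s'
  simp [ptraceR, Matrix.sum_apply]

lemma posSemidef_ptraceR {M : Matrix (S × A) (S × A) ℂ} (hM : M.PosSemidef) :
    (ptraceR M).PosSemidef := by
  rw [ptraceR_eq_sum_submatrix]
  exact posSemidef_sum _ fun a _ => hM.submatrix _

lemma trace_ptraceR [Fintype S] (M : Matrix (S × A) (S × A) ℂ) :
    (ptraceR M).trace = M.trace := by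
  simp [trace, ptraceR, Fintype.sum_prod_type]

variable [Fintype S] [DecidableEq S]

lemma ptraceR_one_kronecker_mul_comm (B : Matrix A A ℂ) (X : Matrix (S × A) (S × A) ℂ) :
    ptraceR (((1 : Matrix S S ℂ) ⊗ₖ B) * X) = ptraceR (X * (1 ⊗ₖ B)) := by
  ext s s'
  simp only [ptraceR, mul_apply, kroneckerMap_apply, one_apply, Fintype.sum_prod_type,
    ite_mul, mul_ite, one_mul, zero_mul, mul_zero]
  refine Eq.trans (Finset.sum_congr rfl fun x _ => Finset.sum_comm) ?_
  refine Eq.trans ?_ (Finset.sum_congr rfl fun x _ => Finset.sum_comm).symm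
  simp only [Finset.sum_ite_eq, Finset.sum_ite_eq', Finset.mem_univ, if_true]
  rw [Finset.sum_comm]
  exact Finset.sum_congr rfl fun a _ => Finset.sum_congr rfl fun b _ => mul_comm _ _

open scoped MatrixOrder in
lemma posSemidef_ptraceR_one_kronecker_mul {M : Matrix A A ℂ}
    (hM : M.PosSemidef) {ρ : Matrix (S × A) (S × A) ℂ} (hρ : ρ.PosSemidef) :
    (ptraceR ((1 ⊗ₖ M) * ρ)).PosSemidef := by
  obtain ⟨B, rfl⟩ := CStarAlgebra.nonneg_iff_eq_star_mul_self.mp hM.nonneg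
  have hstar : ((1 : Matrix S S ℂ) ⊗ₖ B)ᴴ = 1 ⊗ₖ star B := by
    rw [conjTranspose_kronecker, conjTranspose_one, star_eq_conjTranspose]
  rw [← one_mul (1 : Matrix S S ℂ), mul_kronecker_mul, Matrix.mul_assoc,
    ptraceR_one_kronecker_mul_comm, ← hstar]
  exact posSemidef_ptraceR (hρ.mul_mul_conjTranspose_same _)

end PartialTrace

section TopEigenvalues

variable {n : Type*} [Fintype n] [DecidableEq n]

lemma sumTopEigs_le_sum_eigenvalues {M : Matrix n n ℂ} (hM : M.PosSemidef) (d : ℕ) :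
    sumTopEigs hM.1 d ≤ ∑ i, hM.1.eigenvalues i := by
  set l := ((Finset.univ.val.map hM.1.eigenvalues).sort (· ≤ ·)).reverse
  have hl : l.sum = ∑ i, hM.1.eigenvalues i := by
    rw [List.sum_reverse, ← Multiset.sum_coe, Multiset.sort_eq]
    rfl
  have hl_nonneg : ∀ x ∈ l, 0 ≤ x := by
    intro x hx
    obtain ⟨i, -, rfl⟩ := Multiset.mem_map.mp ((Multiset.mem_sort _).mp (List.mem_reverse.mp hx))
    exact hM.eigenvalues_nonneg i
  exact hl ▸ (List.take_sublist d l).sum_le_sum hl_nonneg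

lemma epsD_nonneg {M : Matrix n n ℂ} (hM : M.PosSemidef) (htr : M.trace = 1) (d : ℕ) :
    0 ≤ epsD M d := by
  have hsum : ∑ i, hM.1.eigenvalues i = 1 := by
    simpa [htr] using congrArg RCLike.re hM.1.trace_eq_sum_eigenvalues.symm
  rw [epsD, dif_pos hM.1, sub_nonneg, ← hsum]
  exact sumTopEigs_le_sum_eigenvalues hM d

lemma epsD_inv_trace_smul_nonneg {M : Matrix n n ℂ} (hM : M.PosSemidef) (h0 : M.trace ≠ 0)
    (d : ℕ) : 0 ≤ epsD (M.trace⁻¹ • M) d := by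
  refine epsD_nonneg (hM.smul (inv_nonneg.mpr hM.trace_nonneg)) ?_ d
  rw [trace_smul, smul_eq_mul, inv_mul_cancel₀ h0]

end TopEigenvalues

section Measurement

variable {S A : Type*} [Fintype S] [Fintype A] [DecidableEq S]

/-- The term `p_x ε^(d)(p_x⁻¹ tr_A((1 ⊗ M_x) ρ))` of `classC` for `M_x = M`, zero when `p_x = 0`. -/
noncomputable def outcomeTerm (d : ℕ) (ρ : Matrix (S × A) (S × A) ℂ) (M : Matrix A A ℂ) : ℝ :=
  if (((1 : Matrix S S ℂ) ⊗ₖ M) * ρ).trace = 0 then 0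
  else ((((1 : Matrix S S ℂ) ⊗ₖ M) * ρ).trace).re *
    epsD (((((1 : Matrix S S ℂ) ⊗ₖ M) * ρ).trace)⁻¹ •
      ptraceR (((1 : Matrix S S ℂ) ⊗ₖ M) * ρ)) d

noncomputable def povmAverages [DecidableEq A] (d : ℕ) (ρ : Matrix (S × A) (S × A) ℂ) : Set ℝ :=
  { e | ∃ (m : ℕ) (M : Fin m → Matrix A A ℂ),
    (∀ x, (M x).PosSemidef) ∧ (∑ x, M x = 1) ∧ e = ∑ x, outcomeTerm d ρ (M x) }

lemma classC_eq [DecidableEq A] (d : ℕ) (ρ : Matrix (S × A) (S × A) ℂ) :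
    classC d ρ = epsD (ptraceR ρ) d - sInf (povmAverages d ρ) := rfl

lemma outcomeTerm_nonneg (d : ℕ) {ρ : Matrix (S × A) (S × A) ℂ} (hρ : ρ.PosSemidef)
    {M : Matrix A A ℂ} (hM : M.PosSemidef) : 0 ≤ outcomeTerm d ρ M := by
  have hσ := posSemidef_ptraceR_one_kronecker_mul hM hρ
  rw [outcomeTerm, ← trace_ptraceR]
  split_ifs with h0
  · exact le_rfl
  · exact mul_nonneg (Complex.nonneg_iff.mp hσ.trace_nonneg).1
      (epsD_inv_trace_smul_nonneg hσ h0 d)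

lemma outcomeTerm_one [DecidableEq A] (d : ℕ) {ρ : Matrix (S × A) (S × A) ℂ}
    (htr : ρ.trace = 1) : outcomeTerm d ρ 1 = epsD (ptraceR ρ) d := by
  simp [outcomeTerm, htr]

lemma povmAverages_nonneg [DecidableEq A] (d : ℕ) {ρ : Matrix (S × A) (S × A) ℂ}
    (hρ : ρ.PosSemidef) : ∀ e ∈ povmAverages d ρ, 0 ≤ e := by
  rintro e ⟨m, M, hM, -, rfl⟩
  exact Finset.sum_nonneg fun x _ => outcomeTerm_nonneg d hρ (hM x)

lemma epsD_ptraceR_mem_povmAverages [DecidableEq A] (d : ℕ) {ρ : Matrix (S × A) (S × A) ℂ}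
    (htr : ρ.trace = 1) : epsD (ptraceR ρ) d ∈ povmAverages d ρ :=
  ⟨1, fun _ => 1, fun _ => .one, by simp, by simp [outcomeTerm_one d htr]⟩

end Measurement

theorem stmt9_general {S A : Type*} [Fintype S] [Fintype A] [DecidableEq S] [DecidableEq A]
    (ρ : Matrix (S × A) (S × A) ℂ) (hρ : ρ.PosSemidef) (htr : ρ.trace = 1)
    (d : ℕ) :
    0 ≤ classC d ρ ∧ classC d ρ ≤ epsD (ptraceR ρ) d := by
  have hlower := povmAverages_nonneg d hρ
  have hmem := epsD_ptraceR_mem_povmAverages d htr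
  rw [classC_eq]
  exact ⟨sub_nonneg.mpr (csInf_le ⟨0, hlower⟩ hmem), sub_le_self _ (le_csInf ⟨_, hmem⟩ hlower)⟩

/-- for a density matrix `ρ` on `(S×A)×(S×A)` and `1 ≤ d ≤ |S|`,
`0 ≤ C^(d)_{S|A}(ρ) ≤ ε^(d)(tr_A ρ)`. -/
theorem stmt9 {S A : Type*} [Fintype S] [Fintype A] [DecidableEq S] [DecidableEq A]
    [Nonempty S] [Nonempty A]
    (ρ : Matrix (S × A) (S × A) ℂ) (hρ : ρ.PosSemidef) (htr : ρ.trace = 1)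
    (d : ℕ) (hd1 : 1 ≤ d) (hdn : d ≤ Fintype.card S) :
    0 ≤ classC d ρ ∧ classC d ρ ≤ epsD (ptraceR ρ) d :=
  stmt9_general ρ hρ htr d
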